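/- Let M(x) = (g(x) − i)/x where g(x) = (e^{iax} − e^{-ibx})/((a+b)x) with a, b ≥ 0, a + b > 0. Then |M(x)| ≤ C and |M'(x)| ≤ C/|x| for all x ≠ 0. -/

import Mathlib

/-!
With `φ(θ) = e^{iθ} − 1 − iθ` one has
`N(x) := x² M(x) = (φ(ax) − φ(−bx))/(a+b)` for `x ≠ 0`.
Since `φ'(θ) = i(e^{iθ} − 1)` and `|e^{iθ} − 1| ≤ |θ|`, the mean value theorem gives `|φ(θ)| ≤ θ²`.
Hence `N` satisfies `|N(x)| ≤ A x²` and `|N'(x)| ≤ A |x|` with `A = (a² + b²)/|a + b|`,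
whence `|M| = |N|/x² ≤ A` and `|M'| = |N'/x² − 2N/x³| ≤ 3A/|x|`.
-/

noncomputable section

/-- The function `g(x) = (e^{iax} − e^{-ibx})/((a+b)x)`, extended by `g(0) = i`. -/
def gfun (a b : ℝ) (x : ℝ) : ℂ :=
  if x = 0 then Complex.I
  else (Complex.exp (Complex.I * (a * x : ℝ)) - Complex.exp (-(Complex.I * (b * x : ℝ)))) /
    (((a + b) * x : ℝ) : ℂ)

/-- `M(x) = (g(x) − i)/x`, extended continuously at `0` (its limit there is `(b−a)/2`). -/
def Mfun (a b : ℝ) (x : ℝ) : ℂ :=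
  if x = 0 then (((b - a) / 2 : ℝ) : ℂ) else (gfun a b x - Complex.I) / (x : ℂ)

open Complex Topology

def expIRem (θ : ℝ) : ℂ := cexp (I * θ) - 1 - I * θ

theorem hasDerivAt_expIRem (θ : ℝ) :
    HasDerivAt expIRem (I * (cexp (I * θ) - 1)) θ := by
  have h : HasDerivAt (fun t : ℝ => I * (t : ℂ)) I θ := by
    simpa using (hasDerivAt_id θ).ofReal_comp.const_mul I
  exact ((h.cexp.sub_const 1).sub h).congr_deriv (by ring)

theorem norm_expIRem_le (θ : ℝ) : ‖expIRem θ‖ ≤ θ ^ 2 := by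
  have hderiv_le : ∀ t ∈ Metric.closedBall (0 : ℝ) |θ|, ‖I * (cexp (I * t) - 1)‖ ≤ |θ| := by
    intro t ht
    rw [norm_mul, norm_I, one_mul]
    exact Real.norm_exp_I_mul_ofReal_sub_one_le.trans (by simpa using ht)
  have := (convex_closedBall (0 : ℝ) |θ|).norm_image_sub_le_of_norm_hasDerivWithin_le
    (fun t _ => (hasDerivAt_expIRem t).hasDerivWithinAt) hderiv_le
    (Metric.mem_closedBall_self (abs_nonneg θ)) (by simp : θ ∈ Metric.closedBall (0 : ℝ) |θ|)
  simpa [expIRem, sq_abs, ← sq] using this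

theorem hasDerivAt_expIRem_mul (c t : ℝ) :
    HasDerivAt (fun t => expIRem (c * t)) (c • (I * (cexp (I * ↑(c * t)) - 1))) t :=
  (hasDerivAt_expIRem (c * t)).scomp t (by simpa using (hasDerivAt_id t).const_mul c)

theorem norm_expIRem_mul_le (c t : ℝ) : ‖expIRem (c * t)‖ ≤ c ^ 2 * t ^ 2 :=
  (norm_expIRem_le _).trans_eq (mul_pow c t 2)

theorem norm_deriv_expIRem_mul_le (c t : ℝ) :
    ‖c • (I * (cexp (I * ↑(c * t)) - 1))‖ ≤ c ^ 2 * |t| := by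
  rw [norm_smul, norm_mul, norm_I, one_mul, Real.norm_eq_abs]
  calc |c| * ‖cexp (I * ↑(c * t)) - 1‖ ≤ |c| * |c * t| := by
        gcongr; exact Real.norm_exp_I_mul_ofReal_sub_one_le
    _ = c ^ 2 * |t| := by rw [abs_mul, ← mul_assoc, abs_mul_abs_self, sq]

theorem norm_div_sq_le {f : ℝ → ℂ} {x A : ℝ} (hx : x ≠ 0) (hf : ‖f x‖ ≤ A * x ^ 2) :
    ‖f x / (x : ℂ) ^ 2‖ ≤ A := by
  rw [norm_div, norm_pow, norm_real, Real.norm_eq_abs, sq_abs]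
  exact (div_le_iff₀ (by positivity)).mpr hf

theorem norm_deriv_div_sq_le {f : ℝ → ℂ} {f' : ℂ} {x A B : ℝ} (hx : x ≠ 0)
    (hf : HasDerivAt f f' x) (hfx : ‖f x‖ ≤ A * x ^ 2) (hf' : ‖f'‖ ≤ B * |x|) :
    ‖deriv (fun t => f t / (t : ℂ) ^ 2) x‖ ≤ (B + 2 * A) / |x| := by
  have hxc : (x : ℂ) ≠ 0 := ofReal_ne_zero.mpr hx
  have hsq : HasDerivAt (fun t : ℝ => (t : ℂ) ^ 2) (2 * x) x := by
    simpa using (hasDerivAt_pow 2 (x : ℂ)).comp_ofReal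
  have hquot : HasDerivAt (fun t => f t / (t : ℂ) ^ 2) _ x := hf.div hsq (pow_ne_zero 2 hxc)
  rw [hquot.deriv]
  have hx0 : 0 < |x| := abs_pos.mpr hx
  have hsplit : (f' * (x : ℂ) ^ 2 - f x * (2 * x)) / ((x : ℂ) ^ 2) ^ 2 =
      f' / x ^ 2 - 2 * f x / x ^ 3 := by
    field_simp
  rw [hsplit]
  calc _ ≤ ‖f' / (x : ℂ) ^ 2‖ + ‖2 * f x / (x : ℂ) ^ 3‖ := norm_sub_le _ _
    _ ≤ B * |x| / |x| ^ 2 + 2 * (A * x ^ 2) / |x| ^ 3 := by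
        simp only [norm_div, norm_mul, norm_pow, norm_real, Real.norm_eq_abs, RCLike.norm_ofNat]
        gcongr
    _ = (B + 2 * A) / |x| := by
        rw [← sq_abs x]; field_simp

def Mnum (a b t : ℝ) : ℂ := (expIRem (a * t) - expIRem (-b * t)) / ((a + b : ℝ) : ℂ)

theorem Mfun_eq_Mnum_div_sq {a b x : ℝ} (hab : a + b ≠ 0) (hx : x ≠ 0) :
    Mfun a b x = Mnum a b x / (x : ℂ) ^ 2 := by
  have hab' : (a : ℂ) + b ≠ 0 := by exact_mod_cast hab
  have hx' : (x : ℂ) ≠ 0 := ofReal_ne_zero.mpr hx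
  simp only [Mfun, gfun, Mnum, expIRem, if_neg hx]
  push_cast
  field_simp
  ring

theorem norm_Mnum_le (a b t : ℝ) : ‖Mnum a b t‖ ≤ (a ^ 2 + b ^ 2) / |a + b| * t ^ 2 := by
  rw [Mnum, norm_div, div_mul_eq_mul_div, norm_real, Real.norm_eq_abs]
  gcongr
  calc _ ≤ ‖expIRem (a * t)‖ + ‖expIRem (-b * t)‖ := norm_sub_le _ _
    _ ≤ a ^ 2 * t ^ 2 + (-b) ^ 2 * t ^ 2 :=
        add_le_add (norm_expIRem_mul_le a t) (norm_expIRem_mul_le (-b) t)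
    _ = _ := by ring

theorem exists_hasDerivAt_Mnum (a b t : ℝ) :
    ∃ F', HasDerivAt (Mnum a b) F' t ∧ ‖F'‖ ≤ (a ^ 2 + b ^ 2) / |a + b| * |t| := by
  refine ⟨_, ((hasDerivAt_expIRem_mul a t).sub (hasDerivAt_expIRem_mul (-b) t)).div_const _, ?_⟩
  rw [norm_div, div_mul_eq_mul_div, norm_real, Real.norm_eq_abs]
  gcongr
  calc _ ≤ _ := norm_sub_le _ _
    _ ≤ a ^ 2 * |t| + (-b) ^ 2 * |t| :=
        add_le_add (norm_deriv_expIRem_mul_le a t) (norm_deriv_expIRem_mul_le (-b) t)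
    _ = _ := by ring

theorem norm_Mfun_zero_le {a b : ℝ} (hab : a + b ≠ 0) :
    ‖Mfun a b 0‖ ≤ (a ^ 2 + b ^ 2) / |a + b| := by
  rw [Mfun, if_pos rfl, norm_real, Real.norm_eq_abs, le_div_iff₀ (abs_pos.mpr hab), abs_div,
    abs_two, div_mul_eq_mul_div, ← abs_mul]
  have : |(b - a) * (a + b)| ≤ a ^ 2 + b ^ 2 := by
    rw [abs_le]; constructor <;> nlinarith [sq_nonneg a, sq_nonneg b]
  linarith [abs_nonneg ((b - a) * (a + b))]

theorem stmt4_general (a b : ℝ) (hab : 0 < a + b) :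
    ∃ C : ℝ, (∀ x : ℝ, ‖Mfun a b x‖ ≤ C) ∧
      (∀ x : ℝ, x ≠ 0 → ‖deriv (Mfun a b) x‖ ≤ C / |x|) := by
  set A := (a ^ 2 + b ^ 2) / |a + b|
  have hA : 0 ≤ A := by positivity
  refine ⟨3 * A, fun x => ?_, fun x hx => ?_⟩
  · rcases eq_or_ne x 0 with rfl | hx
    · linarith [norm_Mfun_zero_le hab.ne']
    · rw [Mfun_eq_Mnum_div_sq hab.ne' hx]
      linarith [norm_div_sq_le hx (norm_Mnum_le a b x)]
  · have hM : Mfun a b =ᶠ[𝓝 x] fun t => Mnum a b t / (t : ℂ) ^ 2 :=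
      eventually_ne_nhds hx |>.mono fun t ht => Mfun_eq_Mnum_div_sq hab.ne' ht
    obtain ⟨F', hF, hF'⟩ := exists_hasDerivAt_Mnum a b x
    rw [hM.deriv_eq]
    exact (norm_deriv_div_sq_le hx hF (norm_Mnum_le a b x) hF').trans_eq (by ring)

/-- `|M(x)| ≤ C` and `|M'(x)| ≤ C/|x|` for all `x ≠ 0`. -/
theorem stmt4 (a b : ℝ) (ha : 0 ≤ a) (hb : 0 ≤ b) (hab : 0 < a + b) :
    ∃ C : ℝ, (∀ x : ℝ, ‖Mfun a b x‖ ≤ C) ∧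
      (∀ x : ℝ, x ≠ 0 → ‖deriv (Mfun a b) x‖ ≤ C / |x|) :=
  stmt4_general a b hab

end
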